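/- Let V be a finite-dimensional real inner product space, W a subspace of V, and 𝓖 a semi-flag of V (a finite set of subspaces totally ordered by inclusion containing {0} and V). Then the multi-flag 𝓕 = 𝓖 ∪ {U ∩ W | U ∈ 𝓖}, generated by the length-three semi-flag {0} ⊆ W ⊆ V and 𝓖, is in general position. -/

import Mathlib

/-!
STATEMENT 2: For a subspace W of V and a semi-flag 𝓖 of V, the multi-flag
𝓕 = 𝓖 ∪ {U ∩ W | U ∈ 𝓖} generated by the length-three semi-flag {0} ⊆ W ⊆ V
and 𝓖 is in general position.
-/

set_option linter.unusedSectionVars false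

variable {V : Type*} [NormedAddCommGroup V] [InnerProductSpace ℝ V] [FiniteDimensional ℝ V]

/-- The associated graded piece `W_𝓕 = W ⊓ (Σ_{U ∈ 𝓕, U ⊊ W} U)ᗮ`. -/
noncomputable def gradedPiece (F : Finset (Submodule ℝ V)) (W : Submodule ℝ V) :
    Submodule ℝ V :=
  letI := Classical.decEq (Submodule ℝ V)
  letI : DecidablePred fun U : Submodule ℝ V => U < W := fun _ => Classical.propDecidable _
  W ⊓ ((F.filter fun U => U < W).sup id)ᗮ

/-- `𝓕` is in general position when `V` is the internal direct sum of the pieces `W_𝓕`. -/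
def InGeneralPosition (F : Finset (Submodule ℝ V)) : Prop :=
  letI := Classical.decEq {W // W ∈ F}
  DirectSum.IsInternal fun W : {W // W ∈ F} => gradedPiece F W.1

/-- A semi-flag of `V`: a finite set of subspaces totally ordered by inclusion,
containing `⊥` and `⊤`. -/
def IsSemiFlag (G : Finset (Submodule ℝ V)) : Prop :=
  ⊥ ∈ G ∧ ⊤ ∈ G ∧ ∀ A ∈ G, ∀ B ∈ G, A ≤ B ∨ B ≤ A

/-- The multi-flag 𝓖 ∪ {U ⊓ W | U ∈ 𝓖}, generated by the semi-flag
{0} ⊆ W ⊆ V and the semi-flag 𝓖. -/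
noncomputable def flagWithSubspace (W : Submodule ℝ V) (G : Finset (Submodule ℝ V)) :
    Finset (Submodule ℝ V) :=
  letI := Classical.decEq (Submodule ℝ V)
  G ∪ G.image fun U => U ⊓ W

/-! ### Auxiliary definitions and lemmas -/

/-- The sup of elements of `F` strictly below `X`. -/
noncomputable def Ssup (F : Finset (Submodule ℝ V)) (X : Submodule ℝ V) : Submodule ℝ V :=
  letI := Classical.decEq (Submodule ℝ V)
  letI : DecidablePred fun U : Submodule ℝ V => U < X := fun _ => Classical.propDecidable _
  (F.filter fun U => U < X).sup id

lemma gradedPiece_eq (F : Finset (Submodule ℝ V)) (X : Submodule ℝ V) :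
    gradedPiece F X = X ⊓ (Ssup F X)ᗮ := rfl

lemma Ssup_le_self (F : Finset (Submodule ℝ V)) (X : Submodule ℝ V) : Ssup F X ≤ X := by
  classical
  unfold Ssup
  refine Finset.sup_le fun U hU => ?_
  rw [Finset.mem_filter] at hU
  exact hU.2.le

lemma le_Ssup {F : Finset (Submodule ℝ V)} {X U : Submodule ℝ V} (hU : U ∈ F) (h : U < X) :
    U ≤ Ssup F X := by
  classical
  unfold Ssup
  exact Finset.le_sup (f := id) (Finset.mem_filter.mpr ⟨hU, h⟩)

lemma gradedPiece_vanish {F : Finset (Submodule ℝ V)} {X : Submodule ℝ V} {v : V}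
    (hv : v ∈ gradedPiece F X) (h : v ∈ Ssup F X) : v = 0 := by
  rw [gradedPiece_eq] at hv
  exact (Submodule.disjoint_def.mp (Ssup F X).orthogonal_disjoint) v h hv.2

open Module in
lemma iSup_gradedPiece (F : Finset (Submodule ℝ V)) (hF : ⊤ ∈ F) :
    (⨆ X : {X // X ∈ F}, gradedPiece F X.1) = ⊤ := by
  classical
  have key : ∀ n : ℕ, ∀ X, X ∈ F → finrank ℝ X ≤ n →
      X ≤ ⨆ Y : {X // X ∈ F}, gradedPiece F Y.1 := by
    intro n
    induction n with
    | zero =>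
      intro X hX h0
      have : X = ⊥ := Submodule.finrank_eq_zero.mp (Nat.le_zero.mp h0)
      simp [this]
    | succ n ih =>
      intro X hX hn
      have hS : Ssup F X ≤ X := Ssup_le_self F X
      have hsplit : X ≤ Ssup F X ⊔ gradedPiece F X := by
        intro x hx
        have htop : Ssup F X ⊔ (Ssup F X)ᗮ = ⊤ := Submodule.sup_orthogonal_of_hasOrthogonalProjection
        have hxmem : x ∈ Ssup F X ⊔ (Ssup F X)ᗮ := htop ▸ Submodule.mem_top
        obtain ⟨s, hs, t, ht, hst⟩ := Submodule.mem_sup.mp hxmem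
        have htX : t ∈ X := by
          have : t = x - s := by rw [← hst]; abel
          rw [this]
          exact Submodule.sub_mem X hx (hS hs)
        exact Submodule.mem_sup.mpr ⟨s, hs, t, ⟨htX, ht⟩, hst⟩
      refine le_trans hsplit (sup_le ?_ (le_iSup_of_le ⟨X, hX⟩ le_rfl))
      unfold Ssup
      refine Finset.sup_le fun U hU => ?_
      rw [Finset.mem_filter] at hU
      have hlt : finrank ℝ U < finrank ℝ X := Submodule.finrank_lt_finrank_of_lt hU.2
      exact ih U hU.1 (by omega)
  refine top_le_iff.mp ?_
  exact key (finrank ℝ (⊤ : Submodule ℝ V)) ⊤ hF le_rfl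

/-- The key independence computation. -/
lemma sum_eq_zero_aux (W : Submodule ℝ V) (F : Finset (Submodule ℝ V))
    (h1 : ∀ X ∈ F, ¬X ≤ W → X ⊓ W ∈ F)
    (h2 : ∀ X ∈ F, ∀ Y ∈ F, ¬X ≤ W → ¬Y ≤ W → X ≤ Y ∨ Y ≤ X)
    (h3 : ∀ X ∈ F, ∀ Y ∈ F, X ≤ W → Y ≤ W → X ≤ Y ∨ Y ≤ X)
    (M : Finset {X // X ∈ F}) (g : {X // X ∈ F} → V)
    (hg : ∀ i ∈ M, g i ∈ gradedPiece F i.1)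
    (hsum : ∑ i ∈ M, g i = 0) : ∀ i ∈ M, g i = 0 := by
  classical
  by_contra hcon
  push_neg at hcon
  obtain ⟨iw, hiw, hgiw⟩ := hcon
  set N := M.filter (fun i => g i ≠ 0) with hNdef
  have hNM : N ⊆ M := Finset.filter_subset _ _
  have hNne : N.Nonempty := ⟨iw, Finset.mem_filter.mpr ⟨hiw, hgiw⟩⟩
  have hNsum : ∑ i ∈ N, g i = 0 := by
    rw [hNdef, Finset.sum_filter_ne_zero]; exact hsum
  have hNg : ∀ i ∈ N, g i ≠ 0 := fun i hi => (Finset.mem_filter.mp hi).2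
  -- the element g i₀ equals minus the sum of the others
  have hrest : ∀ i₀ ∈ N, g i₀ = -∑ j ∈ N.erase i₀, g j := by
    intro i₀ hi₀
    have := Finset.add_sum_erase N g hi₀
    rw [hNsum] at this
    linear_combination (norm := abel) this
  set N₁ := N.filter (fun i => ¬ i.1 ≤ W) with hN₁def
  by_cases hc : N₁.Nonempty
  · -- Case A: some element not contained in W
    obtain ⟨i₀, hi₀, hmax⟩ := Set.Finite.exists_maximalFor
      (fun i : {X // X ∈ F} => i.1) (↑N₁ : Set {X // X ∈ F}) N₁.finite_toSet
      (by exact_mod_cast hc)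
    rw [Finset.mem_coe] at hi₀
    have hi₀N : i₀ ∈ N := (Finset.mem_filter.mp hi₀).1
    have hi₀W : ¬ i₀.1 ≤ W := (Finset.mem_filter.mp hi₀).2
    have hmax' : ∀ j ∈ N₁, j.1 ≤ i₀.1 := by
      intro j hj
      rcases h2 _ j.2 _ i₀.2 (Finset.mem_filter.mp hj).2 hi₀W with h | h
      · exact h
      · exact (hmax (Finset.mem_coe.mpr hj) h).ge
    have hmem : ∀ j ∈ N.erase i₀, g j ∈ Ssup F i₀.1 ⊔ W := by
      intro j hj
      have hjN : j ∈ N := Finset.mem_of_mem_erase hj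
      have hne : j ≠ i₀ := Finset.ne_of_mem_erase hj
      have hgj : g j ∈ j.1 := ((gradedPiece_eq F j.1) ▸ hg j (hNM hjN)).1
      by_cases hjW : j.1 ≤ W
      · exact Submodule.mem_sup_right (hjW hgj)
      · have hjN₁ : j ∈ N₁ := Finset.mem_filter.mpr ⟨hjN, hjW⟩
        have hlt : j.1 < i₀.1 :=
          lt_of_le_of_ne (hmax' j hjN₁) (fun h => hne (Subtype.ext h))
        exact Submodule.mem_sup_left (le_Ssup j.2 hlt hgj)
    have hg0 : g i₀ ∈ Ssup F i₀.1 ⊔ W := by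
      rw [hrest i₀ hi₀N]
      exact Submodule.neg_mem _ (Submodule.sum_mem _ hmem)
    have hIW : i₀.1 ⊓ W ∈ F := h1 _ i₀.2 hi₀W
    have hltIW : i₀.1 ⊓ W < i₀.1 :=
      lt_of_le_of_ne inf_le_left (fun h => hi₀W (by rw [← h]; exact inf_le_right))
    have hgS : g i₀ ∈ Ssup F i₀.1 := by
      have hx : g i₀ ∈ (Ssup F i₀.1 ⊔ W) ⊓ i₀.1 :=
        ⟨hg0, ((gradedPiece_eq F i₀.1) ▸ hg i₀ (hNM hi₀N)).1⟩
      rw [sup_inf_assoc_of_le W (Ssup_le_self F i₀.1)] at hx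
      have hle : Ssup F i₀.1 ⊔ (W ⊓ i₀.1) ≤ Ssup F i₀.1 :=
        sup_le le_rfl (by rw [inf_comm]; exact le_Ssup hIW hltIW)
      exact hle hx
    exact hNg i₀ hi₀N (gradedPiece_vanish (hg i₀ (hNM hi₀N)) hgS)
  · -- Case B: all elements contained in W
    have hall : ∀ j ∈ N, j.1 ≤ W := by
      intro j hj
      by_contra hjW
      exact hc ⟨j, Finset.mem_filter.mpr ⟨hj, hjW⟩⟩
    obtain ⟨i₀, hi₀, hmax⟩ := Set.Finite.exists_maximalFor
      (fun i : {X // X ∈ F} => i.1) (↑N : Set {X // X ∈ F}) N.finite_toSet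
      (by exact_mod_cast hNne)
    rw [Finset.mem_coe] at hi₀
    have hmax' : ∀ j ∈ N, j.1 ≤ i₀.1 := by
      intro j hj
      rcases h3 _ j.2 _ i₀.2 (hall j hj) (hall i₀ hi₀) with h | h
      · exact h
      · exact (hmax (Finset.mem_coe.mpr hj) h).ge
    have hmem : ∀ j ∈ N.erase i₀, g j ∈ Ssup F i₀.1 := by
      intro j hj
      have hjN : j ∈ N := Finset.mem_of_mem_erase hj
      have hne : j ≠ i₀ := Finset.ne_of_mem_erase hj
      have hgj : g j ∈ j.1 := ((gradedPiece_eq F j.1) ▸ hg j (hNM hjN)).1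
      have hlt : j.1 < i₀.1 :=
        lt_of_le_of_ne (hmax' j hjN) (fun h => hne (Subtype.ext h))
      exact le_Ssup j.2 hlt hgj
    have hgS : g i₀ ∈ Ssup F i₀.1 := by
      rw [hrest i₀ hi₀]
      exact Submodule.neg_mem _ (Submodule.sum_mem _ hmem)
    exact hNg i₀ hi₀ (gradedPiece_vanish (hg i₀ (hNM hi₀)) hgS)

lemma indep_aux (W : Submodule ℝ V) (F : Finset (Submodule ℝ V))
    (h1 : ∀ X ∈ F, ¬X ≤ W → X ⊓ W ∈ F)
    (h2 : ∀ X ∈ F, ∀ Y ∈ F, ¬X ≤ W → ¬Y ≤ W → X ≤ Y ∨ Y ≤ X)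
    (h3 : ∀ X ∈ F, ∀ Y ∈ F, X ≤ W → Y ≤ W → X ≤ Y ∨ Y ≤ X) :
    iSupIndep (fun i : {X // X ∈ F} => gradedPiece F i.1) := by
  classical
  apply iSupIndep_of_dfinsupp_lsum_injective
  rw [injective_iff_map_eq_zero]
  intro f hf
  have hsum : ∑ i ∈ f.support, ((f i : gradedPiece F i.1) : V) = 0 := by
    rw [DFinsupp.lsum_apply_apply, DFinsupp.sumAddHom_apply] at hf
    simpa [DFinsupp.sum] using hf
  have hz := sum_eq_zero_aux W F h1 h2 h3 f.support (fun i => ((f i : gradedPiece F i.1) : V))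
    (fun i _ => (f i).2) hsum
  ext i
  by_cases hi : i ∈ f.support
  · exact congrArg _ (Subtype.ext (hz i hi) : f i = 0)
  · rw [DFinsupp.notMem_support_iff.mp hi]; rfl

theorem stmt2 (W : Submodule ℝ V) (G : Finset (Submodule ℝ V)) (hG : IsSemiFlag G) :
    InGeneralPosition (flagWithSubspace W G) := by
  classical
  obtain ⟨hbot, htop, hchain⟩ := hG
  set F := flagWithSubspace W G with hFdef
  have hmem : ∀ X, X ∈ F ↔ X ∈ G ∨ ∃ U ∈ G, U ⊓ W = X := by
    intro X
    simp [hFdef, flagWithSubspace, Finset.mem_union, Finset.mem_image]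
  have h1 : ∀ X ∈ F, ¬X ≤ W → X ⊓ W ∈ F := by
    intro X hX hXW
    rcases (hmem X).mp hX with h | ⟨U, hU, rfl⟩
    · exact (hmem _).mpr (Or.inr ⟨X, h, rfl⟩)
    · exact absurd inf_le_right hXW
  have h2 : ∀ X ∈ F, ∀ Y ∈ F, ¬X ≤ W → ¬Y ≤ W → X ≤ Y ∨ Y ≤ X := by
    intro X hX Y hY hXW hYW
    rcases (hmem X).mp hX with hXG | ⟨U, hU, rfl⟩
    · rcases (hmem Y).mp hY with hYG | ⟨U', hU', rfl⟩
      · exact hchain X hXG Y hYG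
      · exact absurd inf_le_right hYW
    · exact absurd inf_le_right hXW
  have h3 : ∀ X ∈ F, ∀ Y ∈ F, X ≤ W → Y ≤ W → X ≤ Y ∨ Y ≤ X := by
    intro X hX Y hY hXW hYW
    have hX' : ∃ U ∈ G, U ⊓ W = X := by
      rcases (hmem X).mp hX with hXG | h
      · exact ⟨X, hXG, inf_eq_left.mpr hXW⟩
      · exact h
    have hY' : ∃ U ∈ G, U ⊓ W = Y := by
      rcases (hmem Y).mp hY with hYG | h
      · exact ⟨Y, hYG, inf_eq_left.mpr hYW⟩
      · exact h
    obtain ⟨U, hU, rfl⟩ := hX'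
    obtain ⟨U', hU', rfl⟩ := hY'
    rcases hchain U hU U' hU' with h | h
    · exact Or.inl (inf_le_inf_right W h)
    · exact Or.inr (inf_le_inf_right W h)
  have htopF : (⊤ : Submodule ℝ V) ∈ F := (hmem ⊤).mpr (Or.inl htop)
  unfold InGeneralPosition
  exact @DirectSum.isInternal_submodule_of_iSupIndep_of_iSup_eq_top ℝ _ _ (Classical.decEq _)
    V _ _ _ (indep_aux W F h1 h2 h3) (iSup_gradedPiece F htopF)
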